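/- Let V(r,s) be the ℂ³ vector ((−33/16 + 5√15·i/16) − e^{ir}/2 + e^{is}(−1/2 − √15·i/2), (−3/4 + √15·i/4) − e^{ir}/2 + e^{is}, −3/4 − √15·i/4)ᵀ and let J = [[0,0,1],[0,1,0],[1,0,0]]. Then the Hermitian norm ⟨V,V⟩ = V* J V equals (−cos(r)+3)cos(s) − sin(s)sin(r) + (3/2)cos(r) + 7/2, and at r = s = π this value is negative, so the corresponding Giraud disk I(C⁻¹BC⁻¹) ∩ I(C) is nonempty. -/
import Mathlib


open Matrix

noncomputable section

def Jform : Matrix (Fin 3) (Fin 3) ℂ :=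
  !![0, 0, 1;
     0, 1, 0;
     1, 0, 0]

def Vparam (r s : ℝ) : Fin 3 → ℂ :=
  ![(-(33 / 16) + 5 * (Real.sqrt 15 : ℂ) * Complex.I / 16) - Complex.exp (r * Complex.I) / 2
      + Complex.exp (s * Complex.I) * (-(1 / 2) - (Real.sqrt 15 : ℂ) * Complex.I / 2),
    (-(3 / 4) + (Real.sqrt 15 : ℂ) * Complex.I / 4) - Complex.exp (r * Complex.I) / 2
      + Complex.exp (s * Complex.I),
    -(3 / 4) - (Real.sqrt 15 : ℂ) * Complex.I / 4]

end

set_option maxHeartbeats 2000000 in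
set_option maxRecDepth 8000 in
theorem giraud_disk_norm :
    (∀ r s : ℝ,
      dotProduct (star (Vparam r s)) (Jform.mulVec (Vparam r s)) =
        (((-Real.cos r + 3) * Real.cos s - Real.sin s * Real.sin r
            + 3 / 2 * Real.cos r + 7 / 2 : ℝ) : ℂ)) ∧
    ((-Real.cos Real.pi + 3) * Real.cos Real.pi - Real.sin Real.pi * Real.sin Real.pi
        + 3 / 2 * Real.cos Real.pi + 7 / 2 < 0) := by
  constructor
  · intro r s
    have ha : (Real.sqrt 15 : ℂ) * (Real.sqrt 15 : ℂ) = 15 := by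
      rw [← Complex.ofReal_mul, Real.mul_self_sqrt (by norm_num)]
      norm_num
    have hr : Complex.exp (r * Complex.I) = Real.cos r + Real.sin r * Complex.I := by
      rw [Complex.exp_mul_I]; simp [Complex.ofReal_cos, Complex.ofReal_sin]
    have hs : Complex.exp (s * Complex.I) = Real.cos s + Real.sin s * Complex.I := by
      rw [Complex.exp_mul_I]; simp [Complex.ofReal_cos, Complex.ofReal_sin]
    have hpr : (Real.cos r : ℂ) * Real.cos r + Real.sin r * Real.sin r = 1 := by
      norm_cast; nlinarith [Real.sin_sq_add_cos_sq r]
    have hps : (Real.cos s : ℂ) * Real.cos s + Real.sin s * Real.sin s = 1 := by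
      norm_cast; nlinarith [Real.sin_sq_add_cos_sq s]
    simp only [Vparam, Jform, dotProduct, mulVec, Fin.sum_univ_three, hr, hs,
      Matrix.cons_val', Matrix.cons_val_zero, Matrix.cons_val_one, Matrix.head_cons,
      Matrix.cons_val_fin_one, Matrix.empty_val', Matrix.head_fin_const,
      Pi.star_apply, Matrix.cons_val_two, Matrix.tail_cons, RCLike.star_def,
      map_add, map_sub, _root_.map_mul, map_div₀, map_neg, map_ofNat, _root_.map_one, Matrix.of_apply,
      Complex.conj_ofReal, Complex.conj_I,
      Complex.ofReal_add, Complex.ofReal_mul, Complex.ofReal_sub, Complex.ofReal_neg,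
      Complex.ofReal_div, Complex.ofReal_ofNat]
    have hI : Complex.I * Complex.I = -1 := Complex.I_mul_I
    linear_combination (-(1/4) * Complex.I^2) * hpr + (-Complex.I^2) * hps
      + ((3/32) * Complex.I^2 - (1/4) * (Real.cos s : ℂ) * Complex.I^2) * ha
      + ((5/32 : ℂ) - (15/4) * (Real.cos s : ℂ) + (Real.cos s : ℂ)^2
          + (Real.sin r : ℂ) * (Real.sin s : ℂ) + (1/4) * (Real.cos r : ℂ)^2) * hI
  · simp [Real.cos_pi, Real.sin_pi]; norm_num
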